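/- If T* is a model companion of a first-order theory T, then the models of T* are exactly the existentially closed models of T_∀: an L-structure M is a model of T* if and only if M ⊨ T_∀ and M is existentially closed for T_∀. -/

import Mathlib

/-!
Everything rests on the diagram method: `K` embeds into a model of `S` in which `ψ(b)` holds
unless some quantifier-free fact `χ(b, d)` true in `K` is refuted by `S` together with `ψ`.
With `ψ = ⊤` this embeds every model of `T_∀` into a model of `T`. For model complete `T*`
and `ψ = ¬φ` it shows that whenever `φ(b)` holds in a model of `T*`, some existential formula
true at `b` implies `φ` modulo `T*`.

A model `M` of `T*` embeds into a model of `T`, so `M ⊨ T_∀`; any model `N` of `T_∀` above `M`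
lies in turn inside a model of `T*`, where model completeness makes `M` elementary, so
existential facts descend from `N` to `M`. Conversely, an existentially closed model `M` of
`T_∀` lies inside a model `P` of `T*`, which is itself a model of `T_∀`; the existential
formulas above let existential closedness verify the Tarski–Vaught test for `M → P`, so
`M ≼ P` and `M ⊨ T*`.
-/

open FirstOrder FirstOrder.Language

universe u v

variable {L : FirstOrder.Language.{u, v}}

/-- A formula is *universal* if it has the form `∀ ȳ, χ` with `χ` quantifier-free. -/
def IsUniversalFormula {α : Type*} (φ : L.Formula α) : Prop :=
  ∃ (n : ℕ) (χ : L.BoundedFormula α n), χ.IsQF ∧ φ = χ.alls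

/-- A formula is *existential* if it has the form `∃ ȳ, χ` with `χ` quantifier-free. -/
def IsExistentialFormula {α : Type*} (φ : L.Formula α) : Prop :=
  ∃ (n : ℕ) (χ : L.BoundedFormula α n), χ.IsQF ∧ φ = χ.exs

/-- A theory is *model complete* if every embedding between models of it is elementary. -/
def IsModelComplete (T : L.Theory) : Prop :=
  ∀ (M N : Type (max u v)) [L.Structure M] [L.Structure N] [Nonempty M] [Nonempty N],
    M ⊨ T → N ⊨ T → ∀ (f : M ↪[L] N) (n : ℕ) (φ : L.Formula (Fin n)) (x : Fin n → M),
      φ.Realize (f ∘ x) ↔ φ.Realize x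

/-- `M` is *existentially closed in `N` via* the embedding `f` if every existential formula
with parameters from `M` that holds in `N` (of the images) already holds in `M`. -/
def IsECVia {M N : Type (max u v)} [L.Structure M] [L.Structure N] (f : M ↪[L] N) : Prop :=
  ∀ (k : ℕ) (φ : L.Formula (Fin k)), IsExistentialFormula φ →
    ∀ x : Fin k → M, φ.Realize (f ∘ x) → φ.Realize x

/-- `M` is *existentially closed for* the theory `T` if `M ⊨ T` and `M` is existentially
closed in every model of `T` via every embedding. -/
def IsECFor (T : L.Theory) (M : Type (max u v)) [L.Structure M] [Nonempty M] : Prop :=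
  M ⊨ T ∧ ∀ (N : Type (max u v)) [L.Structure N] [Nonempty N], N ⊨ T →
    ∀ f : M ↪[L] N, IsECVia f

/-- `T_∀` : the set of universal sentences that are logical consequences of `T`. -/
def universalPart (T : L.Theory) : L.Theory :=
  {φ : L.Sentence | IsUniversalFormula φ ∧ T ⊨ᵇ φ}

/-- `Tstar` is a *model companion* of `T`: `Tstar` is model complete, every model of `T`
embeds into a model of `Tstar`, and every model of `Tstar` embeds into a model of `T`. -/
def IsModelCompanion (T Tstar : L.Theory) : Prop :=
  IsModelComplete Tstar ∧
  (∀ (M : Type (max u v)) [L.Structure M] [Nonempty M], M ⊨ T →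
     ∃ (N : Type (max u v)) (_ : L.Structure N) (_ : Nonempty N),
       N ⊨ Tstar ∧ Nonempty (M ↪[L] N)) ∧
  (∀ (M : Type (max u v)) [L.Structure M] [Nonempty M], M ⊨ Tstar →
     ∃ (N : Type (max u v)) (_ : L.Structure N) (_ : Nonempty N),
       N ⊨ T ∧ Nonempty (M ↪[L] N))

open BoundedFormula

section Formulas

variable {α : Type*}

theorem isUniversal_alls : ∀ {n} {χ : L.BoundedFormula α n}, χ.IsUniversal → χ.alls.IsUniversal
  | 0, _, h => h
  | _ + 1, χ, h => isUniversal_alls (χ := χ.all) h.all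

theorem isQF_iInf {β : Type*} [Finite β] {n : ℕ} {f : β → L.BoundedFormula α n}
    (h : ∀ b, (f b).IsQF) : (BoundedFormula.iInf f).IsQF := by
  have hfold : ∀ l : List (L.BoundedFormula α n), (∀ φ ∈ l, φ.IsQF) →
      (l.foldr (· ⊓ ·) ⊤).IsQF := by
    intro l hl
    induction l with
    | nil => exact IsQF.top
    | cons φ l ih => exact (hl φ (by simp)).inf (ih fun ψ hψ => hl ψ (by simp [hψ]))
  exact hfold _ (by simp [h])

theorem FirstOrder.Language.BoundedFormula.IsQF.restrictFreeVar {β : Type*} [DecidableEq α]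
    {n : ℕ} {φ : L.BoundedFormula α n} (h : φ.IsQF) (f : φ.freeVarFinset → β) :
    (φ.restrictFreeVar f).IsQF := by
  induction h with
  | falsum => exact isQF_bot
  | of_isAtomic h =>
    cases h with
    | equal => exact (IsAtomic.equal _ _).isQF
    | rel => exact (IsAtomic.rel _ _).isQF
  | imp _ _ ih₁ ih₂ => exact (ih₁ _).imp (ih₂ _)

theorem isExistentialFormula_iExs {β : Type*} [Finite β] {χ : L.Formula (α ⊕ β)}
    (h : χ.IsQF) : IsExistentialFormula (χ.iExs β) :=
  ⟨_, _, h.relabel _, rfl⟩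

theorem isUniversalFormula_iAlls {β : Type*} [Finite β] {χ : L.Formula (α ⊕ β)}
    (h : χ.IsQF) : IsUniversalFormula (χ.iAlls β) :=
  ⟨_, _, h.relabel _, rfl⟩

theorem exists_isExistentialFormula_iff_exists_snoc {n : ℕ} {β : Type*} [Finite β]
    {χ : L.Formula (Fin (n + 1) ⊕ β)} (hχ : χ.IsQF) :
    ∃ ε : L.Formula (Fin n), IsExistentialFormula ε ∧
      ∀ (W : Type (max u v)) [L.Structure W] (x : Fin n → W),
        ε.Realize x ↔ ∃ a w, χ.Realize (Sum.elim (Fin.snoc x a) w) := by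
  let g : Fin (n + 1) ⊕ β → Fin n ⊕ Option β :=
    Sum.elim (Fin.lastCases (Sum.inr none) Sum.inl) (Sum.inr ∘ some)
  have hg : ∀ {W : Type (max u v)} (x : Fin n → W) (i : Option β → W),
      Sum.elim x i ∘ g = Sum.elim (Fin.snoc x (i none)) (i ∘ some) := by
    intro W x i
    funext j
    rcases j with j | j
    · refine Fin.lastCases ?_ (fun j => ?_) j <;> simp [g]
    · rfl
  refine ⟨(χ.relabel g).iExs (Option β), isExistentialFormula_iExs (hχ.relabel _),
    fun W _ x => ?_⟩
  simp only [Formula.realize_iExs, Formula.realize_relabel, hg]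
  exact ⟨fun ⟨_, h⟩ => ⟨_, _, h⟩, fun ⟨a, w, h⟩ => ⟨fun o => o.elim a w, h⟩⟩

theorem realize_relabel_toFormula {M : Type*} [L.Structure M] {n : ℕ}
    (φ : L.BoundedFormula Empty n) (x : Fin n → M) :
    (φ.toFormula.relabel (Sum.elim Empty.elim id)).Realize x ↔ φ.Realize default x := by
  rw [Formula.realize_relabel, realize_toFormula, Unique.eq_default (_ ∘ Sum.inl)]
  rfl

end Formulas

section Embeddings

variable {M N : Type*} [L.Structure M] [L.Structure N] {α : Type*}

theorem FirstOrder.Language.BoundedFormula.IsQF.realize_formula_embedding {χ : L.Formula α}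
    (hχ : χ.IsQF) (f : M ↪[L] N) (v : α → M) : χ.Realize (f ∘ v) ↔ χ.Realize v := by
  simpa only [Formula.Realize, Unique.eq_default (f ∘ default)] using
    hχ.realize_embedding f (v := v) (xs := default)

theorem IsExistentialFormula.realize_embedding {φ : L.Formula α} (h : IsExistentialFormula φ)
    (f : M ↪[L] N) {v : α → M} (hv : φ.Realize v) : φ.Realize (f ∘ v) := by
  obtain ⟨n, χ, hχ, rfl⟩ := h
  obtain ⟨xs, hxs⟩ := realize_exs.1 hv
  exact realize_exs.2 ⟨f ∘ xs, (hχ.realize_embedding f).2 hxs⟩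

instance universalPart.isUniversal (T : L.Theory) : (universalPart T).IsUniversal :=
  ⟨fun _ ⟨⟨_, _, hχ, hφ⟩, _⟩ => hφ ▸ isUniversal_alls hχ.isUniversal⟩

theorem model_universalPart {T : L.Theory} [Nonempty N] (hN : N ⊨ T) : N ⊨ universalPart T :=
  (Theory.model_iff _).2 fun _ hφ => hφ.2.realize_sentence N

theorem model_universalPart_of_embedding {T : L.Theory} [Nonempty N] (f : M ↪[L] N)
    (hN : N ⊨ T) : M ⊨ universalPart T :=
  haveI := model_universalPart hN
  Theory.IsUniversal.models_of_embedding f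

def Embedding.ofRealizeQF (g : M → N)
    (hg : ∀ χ : L.Formula M, χ.IsQF → (χ.Realize g ↔ χ.Realize id)) : M ↪[L] N where
  toFun := g
  inj' a b hab := (hg (Term.equal (var a) (var b)) (IsAtomic.equal _ _).isQF).1 hab
  map_fun' f x := by
    have h := (hg (Term.equal (Term.func f fun i => var (x i)) (var (Structure.funMap f x)))
      (IsAtomic.equal _ _).isQF).2 rfl
    simp only [Formula.realize_equal, Term.realize_func, Term.realize_var] at h
    exact h.symm
  map_rel' R x := hg (R.formula fun i => var (x i)) (IsAtomic.rel _ _).isQF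

end Embeddings

theorem isECVia_of_comp {M N P : Type (max u v)} [L.Structure M] [L.Structure N]
    [L.Structure P] (f : M ↪[L] N) (g : N ↪[L] P)
    (hgf : ∀ (n : ℕ) (φ : L.Formula (Fin n)) (x : Fin n → M),
      φ.Realize (g.comp f ∘ x) ↔ φ.Realize x) : IsECVia f :=
  fun k φ hφ x hx => (hgf k φ x).1 (hφ.realize_embedding g hx)

section Diagram

noncomputable def equalityDiagram {β K : Type*} [Finite β] (e : β → K) : L.Formula β :=
  Formula.iInf fun p : {p : β × β // e p.1 = e p.2} => Term.equal (var p.1.1) (var p.1.2)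

theorem isQF_equalityDiagram {β K : Type*} [Finite β] (e : β → K) :
    (equalityDiagram (L := L) e).IsQF :=
  isQF_iInf fun _ => (IsAtomic.equal _ _).isQF

theorem realize_equalityDiagram {β K W : Type*} [L.Structure W] [Finite β] {e : β → K}
    {v : β → W} : (equalityDiagram (L := L) e).Realize v ↔ v.FactorsThrough e := by
  simp [equalityDiagram, Formula.realize_iInf, Function.FactorsThrough]

def qfDiagram (K : Type*) [L.Structure K] : L[[K]].Theory :=
  {σ | ((Formula.equivSentence (L := L)).symm σ).IsQF ∧
    ((Formula.equivSentence (L := L)).symm σ).Realize (id : K → K)}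

theorem realize_iff_of_model_qfDiagram {K W : Type*} [L.Structure K] [L.Structure W]
    [L[[K]].Structure W] [(L.lhomWithConstants K).IsExpansionOn W]
    (hW : W ⊨ qfDiagram (L := L) K) {χ : L.Formula K} (hχ : χ.IsQF) :
    (χ.Realize fun a => (L.con a : W)) ↔ χ.Realize id := by
  have hup : ∀ χ : L.Formula K, χ.IsQF → χ.Realize id → χ.Realize fun a => (L.con a : W) :=
    fun χ hχ h => (Formula.realize_equivSentence W χ).1 <|
      Theory.realize_sentence_of_mem (qfDiagram (L := L) K) (by simpa [qfDiagram] using ⟨hχ, h⟩)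
  refine ⟨fun h => by_contra fun hn => ?_, hup χ hχ⟩
  exact (Formula.realize_not.1 (hup χ.not hχ.not (Formula.realize_not.2 hn))) h

variable {K : Type (max u v)} [L.Structure K]

theorem exists_embedding_of_isSatisfiable {S : L.Theory} {α : Type*} {ψ : L.Formula α}
    {b : α → K} (hD : ((L.lhomWithConstants K).onTheory S ∪ qfDiagram K ∪
      {Formula.equivSentence (ψ.relabel b)}).IsSatisfiable) :
    ∃ (W : Type (max u v)) (_ : L.Structure W) (_ : Nonempty W), W ⊨ S ∧
      ∃ f : K ↪[L] W, ψ.Realize (f ∘ b) := by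
  obtain ⟨W⟩ := hD
  let _ := (L.lhomWithConstants K).reduct W
  have : (L.lhomWithConstants K).IsExpansionOn W := LHom.isExpansionOn_reduct _ _
  have hW := W.is_model
  have hK : W ⊨ qfDiagram (L := L) K :=
    hW.mono (Set.subset_union_right.trans Set.subset_union_left)
  have hS : W ⊨ (L.lhomWithConstants K).onTheory S :=
    hW.mono (Set.subset_union_left.trans Set.subset_union_left)
  have hψ : W ⊨ Formula.equivSentence (ψ.relabel b) :=
    (hW.mono Set.subset_union_right).realize_of_mem _ rfl
  rw [Formula.realize_equivSentence, Formula.realize_relabel] at hψ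
  exact ⟨W, _, inferInstance, (LHom.onTheory_model _ _).1 hS,
    Embedding.ofRealizeQF _ fun χ hχ => realize_iff_of_model_qfDiagram hK hχ, hψ⟩

theorem exists_isQF_of_not_isSatisfiable {S : L.Theory} {α : Type*} [Finite α]
    {ψ : L.Formula α} {b : α → K} (hD : ¬((L.lhomWithConstants K).onTheory S ∪ qfDiagram K ∪
      {Formula.equivSentence (ψ.relabel b)}).IsSatisfiable) :
    ∃ (β : Type (max u v)) (_ : Finite β) (χ : L.Formula (α ⊕ β)), χ.IsQF ∧
      (∃ w, χ.Realize (Sum.elim b w)) ∧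
      ∀ (W : Type (max u v)) [L.Structure W] [Nonempty W], W ⊨ S →
        ∀ (v : α → W) (w : β → W), χ.Realize (Sum.elim v w) → ¬ψ.Realize v := by
  classical
  have hfin := mt Theory.isSatisfiable_iff_isFinitelySatisfiable.2 hD
  simp only [Theory.IsFinitelySatisfiable, not_forall, exists_prop] at hfin
  obtain ⟨T₀, hT₀, hT₀unsat⟩ := hfin
  let χ : L.Formula K := Formula.iInf fun σ : {σ : T₀ // σ.1 ∈ qfDiagram (L := L) K} =>
    Formula.equivSentence.symm σ.1.1
  have hχ : χ.IsQF := isQF_iInf fun σ => σ.2.1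
  -- The free variables of `χ` become the witnesses `w`; `equalityDiagram` makes the values
  -- assigned to `b` and to them glue to a map `K → W`, which interprets the constants.
  refine ⟨χ.freeVarFinset, inferInstance,
    χ.restrictFreeVar Sum.inr ⊓ equalityDiagram (Sum.elim b Subtype.val),
    (hχ.restrictFreeVar _).inf (isQF_equalityDiagram _), ⟨Subtype.val, ?_⟩, ?_⟩
  · refine Formula.realize_inf.2 ⟨(realize_restrictFreeVar (f := Sum.inr)
      (v := Sum.elim b Subtype.val) (xs := default) id fun _ => rfl).2 ?_,
      realize_equalityDiagram.2 fun _ _ h => h⟩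
    exact Formula.realize_iInf.2 fun σ => σ.2.2
  intro W _ _ hW v w hvw hψ
  obtain ⟨hχvw, hvw⟩ := Formula.realize_inf.1 hvw
  let c : K → W :=
    Function.extend (Sum.elim b Subtype.val) (Sum.elim v w) fun _ => Classical.arbitrary W
  have hc : ∀ i, c (Sum.elim b Subtype.val i) = Sum.elim v w i :=
    (realize_equalityDiagram.1 hvw).extend_apply _
  let _ : (constantsOn K).Structure W := constantsOn.structure c
  let _ : L[[K]].Structure W := L.withConstantsStructure K
  have : (L.lhomWithConstants K).IsExpansionOn W := L.withConstants_expansion K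
  have : W ⊨ (T₀ : L[[K]].Theory) := by
    refine (Theory.model_iff _).2 fun σ hσ => ?_
    rcases hT₀ hσ with (hσS | hσK) | rfl
    · exact ((LHom.onTheory_model _ _).2 hW).realize_of_mem σ hσS
    · have hχc : χ.Realize c := (realize_restrictFreeVar (f := Sum.inr) (v := Sum.elim v w)
        (xs := default) c fun a => (hc (Sum.inr a)).symm).1 hχvw
      exact (Formula.realize_equivSentence_symm_con W σ).1
        (Formula.realize_iInf.1 hχc ⟨⟨σ, hσ⟩, hσK⟩)
    · rw [Formula.realize_equivSentence, Formula.realize_relabel]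
      convert hψ
      exact funext fun i => hc (Sum.inl i)
  exact hT₀unsat ⟨Theory.ModelType.of _ W⟩

theorem exists_embedding_or_exists_isQF (S : L.Theory) (K : Type (max u v)) [L.Structure K]
    {α : Type*} [Finite α] (ψ : L.Formula α) (b : α → K) :
    (∃ (W : Type (max u v)) (_ : L.Structure W) (_ : Nonempty W), W ⊨ S ∧
      ∃ f : K ↪[L] W, ψ.Realize (f ∘ b)) ∨
    ∃ (β : Type (max u v)) (_ : Finite β) (χ : L.Formula (α ⊕ β)), χ.IsQF ∧
      (∃ w, χ.Realize (Sum.elim b w)) ∧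
      ∀ (W : Type (max u v)) [L.Structure W] [Nonempty W], W ⊨ S →
        ∀ (v : α → W) (w : β → W), χ.Realize (Sum.elim v w) → ¬ψ.Realize v :=
  (em _).imp exists_embedding_of_isSatisfiable exists_isQF_of_not_isSatisfiable

theorem exists_embedding_model_of_model_universalPart {S : L.Theory} (hK : K ⊨ universalPart S) :
    ∃ (W : Type (max u v)) (_ : L.Structure W) (_ : Nonempty W), W ⊨ S ∧ Nonempty (K ↪[L] W) := by
  obtain ⟨W, _, _, hW, f, -⟩ | ⟨β, _, χ, hχ, ⟨w, hw⟩, hS⟩ :=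
    exists_embedding_or_exists_isQF S K (⊤ : L.Formula Empty) default
  · exact ⟨W, _, inferInstance, hW, ⟨f⟩⟩
  · have hθ : χ.not.iAlls β ∈ universalPart S := by
      refine ⟨isUniversalFormula_iAlls hχ.not, Theory.models_sentence_iff.2 fun W => ?_⟩
      exact Formula.realize_iAlls.2 fun w hw =>
        hS W W.is_model default w hw (Formula.realize_top.2 trivial)
    exact absurd hw (Formula.realize_iAlls.1 (hK.realize_of_mem _ hθ) w)

end Diagram

section ModelComplete

variable {T : L.Theory}

theorem exists_isQF_of_isModelComplete (hT : IsModelComplete T) {K : Type (max u v)} [L.Structure K] [Nonempty K]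
    (hK : K ⊨ T) {n : ℕ} {ψ : L.Formula (Fin n)} {b : Fin n → K} (hψ : ψ.Realize b) :
    ∃ (β : Type (max u v)) (_ : Finite β) (χ : L.Formula (Fin n ⊕ β)), χ.IsQF ∧
      (∃ w, χ.Realize (Sum.elim b w)) ∧
      ∀ (W : Type (max u v)) [L.Structure W] [Nonempty W], W ⊨ T →
        ∀ (v : Fin n → W) (w : β → W), χ.Realize (Sum.elim v w) → ψ.Realize v := by
  obtain ⟨W, _, _, hW, f, hf⟩ | ⟨β, _, χ, hχ, hb, hχψ⟩ :=
    exists_embedding_or_exists_isQF T K ψ.not b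
  · exact absurd ((hT K W hK hW f n ψ b).2 hψ) (Formula.realize_not.1 hf)
  · exact ⟨β, inferInstance, χ, hχ, hb, fun W _ _ hW v w h => not_not.1 (hχψ W hW v w h)⟩

theorem model_of_isECVia (hT : IsModelComplete T) {M P : Type (max u v)} [L.Structure M] [L.Structure P] [Nonempty P]
    (hP : P ⊨ T) (e : M ↪[L] P) (he : IsECVia e) : M ⊨ T := by
  refine ((e.toElementaryEmbedding fun n φ x a ha => ?_).theory_model_iff T).2 hP
  obtain ⟨β, _, χ, hχ, ⟨w, hw⟩, hχφ⟩ :=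
    exists_isQF_of_isModelComplete hT hP ((realize_relabel_toFormula φ _).2 ha)
  obtain ⟨ε, hε, hεχ⟩ := exists_isExistentialFormula_iff_exists_snoc hχ
  obtain ⟨c, w', hc⟩ := (hεχ M x).1 (he n ε hε x ((hεχ P (e ∘ x)).2 ⟨a, w, hw⟩))
  refine ⟨c, (realize_relabel_toFormula φ _).1 (hχφ P hP _ (e ∘ w') ?_)⟩
  rw [← Fin.comp_snoc, ← Sum.comp_elim]
  exact (hχ.realize_formula_embedding e _).2 hc

end ModelComplete

/-- The models of a model companion of `T` are exactly the existentially closed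
models of `T_∀`. -/
theorem modelCompanion_models_iff_ec (T Tstar : L.Theory)
    (h : IsModelCompanion T Tstar) :
    ∀ (M : Type (max u v)) [L.Structure M] [Nonempty M],
      M ⊨ Tstar ↔ IsECFor (universalPart T) M := by
  obtain ⟨hMC, hTtoStar, hStarToT⟩ := h
  intro M _ _
  constructor
  · intro hM
    obtain ⟨N, _, _, hN, ⟨f⟩⟩ := hStarToT M hM
    refine ⟨model_universalPart_of_embedding f hN, fun N' _ _ hN' f' => ?_⟩
    obtain ⟨W, _, _, hW, ⟨g⟩⟩ := exists_embedding_model_of_model_universalPart hN'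
    obtain ⟨P, _, _, hP, ⟨j⟩⟩ := hTtoStar W hW
    exact isECVia_of_comp f' (j.comp g) (hMC M P hM hP _)
  · rintro ⟨hM, hEC⟩
    obtain ⟨W, _, _, hW, ⟨g⟩⟩ := exists_embedding_model_of_model_universalPart hM
    obtain ⟨P, _, _, hP, ⟨f⟩⟩ := hTtoStar W hW
    obtain ⟨Q, _, _, hQ, ⟨j⟩⟩ := hStarToT P hP
    exact model_of_isECVia hMC hP (f.comp g) (hEC P (model_universalPart_of_embedding j hQ) _)
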